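/- arXiv:2601.16258 — 2 statements merged into one kernel-verified Lean document; each statement's English description precedes it below -/
import Mathlib

section
/- Let |ψ⟩ and |φ⟩ be n-qubit stabilizer states with stabilizer groups S(ψ) and S(φ), each of order 2^n, such that no element σ of S(ψ) satisfies -σ ∈ S(φ). If the intersection S(ψ) ∩ S(φ) has exactly 2^r elements, then |⟨φ|ψ⟩|² = 2^{r-n}. -/
open Matrix
open scoped Classical

noncomputable section

def PauliX : Matrix (Fin 2) (Fin 2) ℂ := !![0, 1; 1, 0]
def PauliY : Matrix (Fin 2) (Fin 2) ℂ := !![0, -Complex.I; Complex.I, 0]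
def PauliZ : Matrix (Fin 2) (Fin 2) ℂ := !![1, 0; 0, -1]

/-- The tensor product P₁ ⊗ ... ⊗ Pₙ of single-qubit operators on n qubits. -/
def tensorString {n : ℕ} (P : Fin n → Matrix (Fin 2) (Fin 2) ℂ) :
    Matrix (Fin n → Fin 2) (Fin n → Fin 2) ℂ :=
  Matrix.of fun f g => ∏ i, P i (f i) (g i)

/-- An element of the n-qubit Pauli group: a phase i^k times a tensor product of
Pauli matrices and identities. -/
def IsPauliElem {n : ℕ} (M : Matrix (Fin n → Fin 2) (Fin n → Fin 2) ℂ) : Prop :=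
  ∃ (k : ℕ) (P : Fin n → Matrix (Fin 2) (Fin 2) ℂ),
    (∀ i, P i ∈ ({1, PauliX, PauliY, PauliZ} : Set (Matrix (Fin 2) (Fin 2) ℂ))) ∧
    M = (Complex.I ^ k) • tensorString P

/-- The stabilizer group of a state ψ: all Pauli group elements g with g ψ = ψ. -/
def Stab {n : ℕ} (ψ : (Fin n → Fin 2) → ℂ) :
    Set (Matrix (Fin n → Fin 2) (Fin n → Fin 2) ℂ) :=
  {M | IsPauliElem M ∧ M.mulVec ψ = ψ}

abbrev PaSet : Set (Matrix (Fin 2) (Fin 2) ℂ) := {1, PauliX, PauliY, PauliZ}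

lemma pauli_sq {A : Matrix (Fin 2) (Fin 2) ℂ} (hA : A ∈ PaSet) : A * A = 1 := by
  rcases hA with h | h | h | h <;> subst h <;>
    simp [PauliX, PauliY, PauliZ, Matrix.mul_fin_two, Matrix.one_fin_two, Complex.I_mul_I]

lemma pauli_herm {A : Matrix (Fin 2) (Fin 2) ℂ} (hA : A ∈ PaSet) : Aᴴ = A := by
  rcases hA with h | h | h | h <;> subst h <;>
    simp [PauliX, PauliY, PauliZ] <;>
    ext i j <;> fin_cases i <;> fin_cases j <;>
    simp [Matrix.conjTranspose_apply, Complex.ext_iff]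

lemma pauli_trace {A : Matrix (Fin 2) (Fin 2) ℂ} (hA : A ∈ PaSet) (h1 : A ≠ 1) :
    A.trace = 0 := by
  rcases hA with h | h | h | h <;> subst h
  · exact absurd rfl h1
  all_goals simp [PauliX, PauliY, PauliZ, Matrix.trace_fin_two]

lemma pauli_mul {A B : Matrix (Fin 2) (Fin 2) ℂ} (hA : A ∈ PaSet) (hB : B ∈ PaSet) :
    ∃ (m : ℕ) (C : Matrix (Fin 2) (Fin 2) ℂ), C ∈ PaSet ∧ A * B = (Complex.I ^ m) • C := by
  rcases hA with h | h | h | h <;> subst h <;> rcases hB with h | h | h | h <;> subst h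
  · exact ⟨0, 1, Or.inl rfl, by simp⟩
  · exact ⟨0, PauliX, by simp [PaSet], by simp⟩
  · exact ⟨0, PauliY, by simp [PaSet], by simp⟩
  · exact ⟨0, PauliZ, by simp [PaSet], by simp⟩
  · exact ⟨0, PauliX, by simp [PaSet], by simp⟩
  · exact ⟨0, 1, Or.inl rfl, by simp [pauli_sq (show PauliX ∈ PaSet by simp [PaSet])]⟩
  · refine ⟨1, PauliZ, by simp [PaSet], ?_⟩
    simp [PauliX, PauliY, PauliZ, Matrix.mul_fin_two, Matrix.smul_of, Complex.I_mul_I]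
  · refine ⟨3, PauliY, by simp [PaSet], ?_⟩
    simp [PauliX, PauliY, PauliZ, Matrix.mul_fin_two, pow_succ, Complex.I_mul_I]
  · exact ⟨0, PauliY, by simp [PaSet], by simp⟩
  · refine ⟨3, PauliZ, by simp [PaSet], ?_⟩
    simp [PauliX, PauliY, PauliZ, Matrix.mul_fin_two, pow_succ, Complex.I_mul_I]
  · exact ⟨0, 1, Or.inl rfl, by simp [pauli_sq (show PauliY ∈ PaSet by simp [PaSet])]⟩
  · refine ⟨1, PauliX, by simp [PaSet], ?_⟩
    simp [PauliX, PauliY, PauliZ, Matrix.mul_fin_two, Complex.I_mul_I]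
  · exact ⟨0, PauliZ, by simp [PaSet], by simp⟩
  · refine ⟨1, PauliY, by simp [PaSet], ?_⟩
    simp [PauliX, PauliY, PauliZ, Matrix.mul_fin_two, Complex.I_mul_I]
  · refine ⟨3, PauliX, by simp [PaSet], ?_⟩
    simp [PauliX, PauliY, PauliZ, Matrix.mul_fin_two, pow_succ, Complex.I_mul_I]
  · exact ⟨0, 1, Or.inl rfl, by simp [pauli_sq (show PauliZ ∈ PaSet by simp [PaSet])]⟩

lemma pauli_trace_mul {A B : Matrix (Fin 2) (Fin 2) ℂ} (hA : A ∈ PaSet) (hB : B ∈ PaSet)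
    (hne : A ≠ B) : (A * B).trace = 0 := by
  rcases hA with h | h | h | h <;> subst h <;> rcases hB with h | h | h | h <;> subst h <;>
    first
      | exact absurd rfl hne
      | simp [PauliX, PauliY, PauliZ, Matrix.mul_fin_two, Matrix.one_fin_two,
          Matrix.trace_fin_two, Complex.I_mul_I]

lemma tensorString_mul (P Q : Fin n → Matrix (Fin 2) (Fin 2) ℂ) :
    tensorString P * tensorString Q = tensorString (fun i => P i * Q i) := by
  ext f g
  simp only [tensorString, Matrix.mul_apply, Matrix.of_apply]
  rw [Finset.prod_univ_sum]
  rw [Fintype.piFinset_univ]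
  exact Finset.sum_congr rfl fun h _ => (Finset.prod_mul_distrib).symm

lemma tensorString_trace (P : Fin n → Matrix (Fin 2) (Fin 2) ℂ) :
    (tensorString P).trace = ∏ i, (P i).trace := by
  simp only [Matrix.trace, Matrix.diag, tensorString, Matrix.of_apply]
  rw [Finset.prod_univ_sum, Fintype.piFinset_univ]

lemma tensorString_one : tensorString (fun _ : Fin n => (1 : Matrix (Fin 2) (Fin 2) ℂ)) = 1 := by
  ext f g
  simp only [tensorString, Matrix.of_apply, Matrix.one_apply]
  by_cases h : f = g
  · subst h; simp
  · rw [if_neg h]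
    obtain ⟨i, hi⟩ : ∃ i, f i ≠ g i := by
      by_contra hc; push_neg at hc; exact h (funext hc)
    exact Finset.prod_eq_zero (Finset.mem_univ i) (by simp [Matrix.one_apply, hi])

lemma tensorString_smul (c : Fin n → ℂ) (P : Fin n → Matrix (Fin 2) (Fin 2) ℂ) :
    tensorString (fun i => c i • P i) = (∏ i, c i) • tensorString P := by
  ext f g
  simp only [tensorString, Matrix.of_apply, Matrix.smul_apply, smul_eq_mul]
  rw [← Finset.prod_mul_distrib]

lemma tensorString_conjTranspose (P : Fin n → Matrix (Fin 2) (Fin 2) ℂ) :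
    (tensorString P)ᴴ = tensorString (fun i => (P i)ᴴ) := by
  ext f g
  simp only [tensorString, Matrix.conjTranspose_apply, Matrix.of_apply]
  exact star_prod _ _

variable {n : ℕ}

lemma isPauliElem_one : IsPauliElem (1 : Matrix (Fin n → Fin 2) (Fin n → Fin 2) ℂ) :=
  ⟨0, fun _ => 1, fun _ => Or.inl rfl, by simp [tensorString_one]⟩

lemma isPauliElem_mul {M N : Matrix (Fin n → Fin 2) (Fin n → Fin 2) ℂ}
    (hM : IsPauliElem M) (hN : IsPauliElem N) : IsPauliElem (M * N) := by
  obtain ⟨k, P, hP, rfl⟩ := hM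
  obtain ⟨l, Q, hQ, rfl⟩ := hN
  choose m C hC hmc using fun i => pauli_mul (hP i) (hQ i)
  refine ⟨k + l + ∑ i, m i, C, hC, ?_⟩
  rw [smul_mul_smul_comm, tensorString_mul]
  have : (fun i => P i * Q i) = fun i => (Complex.I ^ m i) • C i := funext hmc
  rw [this, tensorString_smul, smul_smul, ← pow_add, Finset.prod_pow_eq_pow_sum, ← pow_add]

section StabFacts

variable {ψ : (Fin n → Fin 2) → ℂ} (hψ0 : ψ ≠ 0)

lemma stab_one : (1 : Matrix (Fin n → Fin 2) (Fin n → Fin 2) ℂ) ∈ Stab ψ :=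
  ⟨isPauliElem_one, by simp⟩

lemma stab_mul {g h : Matrix (Fin n → Fin 2) (Fin n → Fin 2) ℂ}
    (hg : g ∈ Stab ψ) (hh : h ∈ Stab ψ) : g * h ∈ Stab ψ :=
  ⟨isPauliElem_mul hg.1 hh.1, by rw [← Matrix.mulVec_mulVec, hh.2, hg.2]⟩

lemma string_sq {P : Fin n → Matrix (Fin 2) (Fin 2) ℂ}
    (hP : ∀ i, P i ∈ PaSet) : tensorString P * tensorString P = 1 := by
  rw [tensorString_mul]
  have : (fun i => P i * P i) = fun _ : Fin n => (1 : Matrix (Fin 2) (Fin 2) ℂ) :=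
    funext fun i => pauli_sq (hP i)
  rw [this, tensorString_one]

include hψ0 in
lemma stab_phase {g : Matrix (Fin n → Fin 2) (Fin n → Fin 2) ℂ} (hg : g ∈ Stab ψ)
    {k : ℕ} {P : Fin n → Matrix (Fin 2) (Fin 2) ℂ} (hP : ∀ i, P i ∈ PaSet)
    (hrep : g = (Complex.I ^ k) • tensorString P) : Complex.I ^ (2 * k) = 1 := by
  have hsq : (g * g).mulVec ψ = ψ := by
    rw [← Matrix.mulVec_mulVec, hg.2, hg.2]
  have hgg : g * g = (Complex.I ^ (2 * k)) • (1 : Matrix (Fin n → Fin 2) (Fin n → Fin 2) ℂ) := by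
    rw [hrep, smul_mul_smul_comm, string_sq hP, ← pow_add, two_mul]
  rw [hgg] at hsq
  obtain ⟨x, hx⟩ : ∃ x, ψ x ≠ 0 := by
    by_contra hc; push_neg at hc; exact hψ0 (funext hc)
  have := congrFun hsq x
  simp only [Matrix.smul_mulVec, Matrix.one_mulVec, Pi.smul_apply, smul_eq_mul] at this
  have h2 : (Complex.I ^ (2 * k) - 1) * ψ x = 0 := by linear_combination this
  rcases mul_eq_zero.1 h2 with h | h
  · exact sub_eq_zero.1 h
  · exact absurd h hx

include hψ0 in
lemma stab_sq {g : Matrix (Fin n → Fin 2) (Fin n → Fin 2) ℂ} (hg : g ∈ Stab ψ) :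
    g * g = 1 := by
  obtain ⟨k, P, hP, hrep⟩ := hg.1
  have h1 := stab_phase hψ0 hg hP hrep
  rw [hrep, smul_mul_smul_comm, string_sq hP, ← pow_add, ← two_mul, h1, one_smul]

include hψ0 in
lemma stab_herm {g : Matrix (Fin n → Fin 2) (Fin n → Fin 2) ℂ} (hg : g ∈ Stab ψ) :
    gᴴ = g := by
  obtain ⟨k, P, hP, hrep⟩ := hg.1
  have hstr : (tensorString P)ᴴ = tensorString P := by
    rw [tensorString_conjTranspose]
    have hfe : (fun i => (P i)ᴴ) = P := funext fun i => pauli_herm (hP i)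
    rw [hfe]
  have hgh : gᴴ * g = 1 := by
    rw [hrep, Matrix.conjTranspose_smul, hstr, smul_mul_smul_comm, string_sq hP]
    have hs1 : star (Complex.I ^ k) * Complex.I ^ k = 1 := by
      rw [star_pow, ← mul_pow]
      simp [Complex.star_def, Complex.conj_I]
    rw [hs1, one_smul]
  calc gᴴ = gᴴ * (g * g) := by rw [stab_sq hψ0 hg, mul_one]
    _ = (gᴴ * g) * g := by rw [mul_assoc]
    _ = g := by rw [hgh, one_mul]

include hψ0 in
lemma stab_trace {g : Matrix (Fin n → Fin 2) (Fin n → Fin 2) ℂ} (hg : g ∈ Stab ψ)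
    (hg1 : g ≠ 1) : g.trace = 0 := by
  obtain ⟨k, P, hP, hrep⟩ := hg.1
  by_cases hall : ∀ i, P i = 1
  · exfalso
    have hstr : tensorString P = 1 := by
      rw [funext hall]; exact tensorString_one
    obtain ⟨x, hx⟩ : ∃ x, ψ x ≠ 0 := by
      by_contra hc; push_neg at hc; exact hψ0 (funext hc)
    have := congrFun hg.2 x
    rw [hrep, hstr] at this
    simp only [Matrix.smul_mulVec, Matrix.one_mulVec, Pi.smul_apply, smul_eq_mul] at this
    have hk : Complex.I ^ k = 1 := by
      have h2 : (Complex.I ^ k - 1) * ψ x = 0 := by linear_combination this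
      rcases mul_eq_zero.1 h2 with h | h
      · exact sub_eq_zero.1 h
      · exact absurd h hx
    apply hg1
    rw [hrep, hstr, hk, one_smul]
  · push_neg at hall
    obtain ⟨i, hi⟩ := hall
    rw [hrep, Matrix.trace_smul, tensorString_trace]
    rw [Finset.prod_eq_zero (Finset.mem_univ i) (pauli_trace (hP i) hi)]
    simp

end StabFacts

lemma trace_one_card : (1 : Matrix (Fin n → Fin 2) (Fin n → Fin 2) ℂ).trace = (2 : ℂ) ^ n := by
  rw [Matrix.trace_one]
  simp [Fintype.card_fun]

lemma stab_trace_orth {ψ φ : (Fin n → Fin 2) → ℂ} (hψ0 : ψ ≠ 0) (hφ0 : φ ≠ 0)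
    {g h : Matrix (Fin n → Fin 2) (Fin n → Fin 2) ℂ}
    (hg : g ∈ Stab ψ) (hh : h ∈ Stab φ) (hne : h ≠ g) (hng : -g ∉ Stab φ) :
    (g * h).trace = 0 := by
  obtain ⟨k, P, hP, hrepg⟩ := hg.1
  obtain ⟨l, Q, hQ, hreph⟩ := hh.1
  by_cases hPQ : ∀ i, P i = Q i
  · exfalso
    have hQP : Q = P := funext fun i => (hPQ i).symm
    have hk2 : Complex.I ^ (2 * k) = 1 := stab_phase hψ0 hg hP hrepg
    have hl2 : Complex.I ^ (2 * l) = 1 := stab_phase hφ0 hh hQ hreph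
    have hk : Complex.I ^ k = 1 ∨ Complex.I ^ k = -1 := by
      rw [two_mul, pow_add] at hk2; exact mul_self_eq_one_iff.1 hk2
    have hl : Complex.I ^ l = 1 ∨ Complex.I ^ l = -1 := by
      rw [two_mul, pow_add] at hl2; exact mul_self_eq_one_iff.1 hl2
    rw [hQP] at hreph
    rcases hk with hk | hk <;> rcases hl with hl | hl
    · exact hne (by rw [hreph, hrepg, hk, hl])
    · refine hng ?_
      have hgh : -g = h := by rw [hrepg, hreph, hk, hl, one_smul, neg_one_smul]
      rw [hgh]; exact hh
    · refine hng ?_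
      have hgh : -g = h := by rw [hrepg, hreph, hk, hl, one_smul, neg_one_smul, neg_neg]
      rw [hgh]; exact hh
    · exact hne (by rw [hreph, hrepg, hk, hl])
  · push_neg at hPQ
    obtain ⟨i, hi⟩ := hPQ
    rw [hrepg, hreph, smul_mul_smul_comm, tensorString_mul, Matrix.trace_smul,
      tensorString_trace]
    have : ∀ j : Fin n, ((fun j => P j * Q j) j).trace = (P j * Q j).trace := fun _ => rfl
    rw [Finset.prod_eq_zero (Finset.mem_univ i)
      (by exact pauli_trace_mul (hP i) (hQ i) hi)]
    simp


lemma msum_mulVec {m : Type*} [Fintype m] {ι : Type*} (s : Finset ι)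
    (A : ι → Matrix m m ℂ) (v : m → ℂ) :
    (∑ i ∈ s, A i).mulVec v = ∑ i ∈ s, (A i).mulVec v := by
  funext x
  simp only [Matrix.mulVec, dotProduct, Finset.sum_apply, Matrix.sum_apply,
    Finset.sum_mul]
  exact Finset.sum_comm

lemma herm_idem_trace_zero {m : Type*} [Fintype m] [DecidableEq m] {M : Matrix m m ℂ}
    (hH : Mᴴ = M) (hI : M * M = M) (hT : M.trace = 0) : M = 0 := by
  have hsym : ∀ i k : m, M k i = star (M i k) := by
    intro i k
    conv_lhs => rw [← hH]
    exact Matrix.conjTranspose_apply M i k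
  have h0 : ((∑ i : m, ∑ k : m, Complex.normSq (M i k) : ℝ) : ℂ) = 0 := by
    push_cast
    calc (∑ i : m, ∑ k : m, (Complex.normSq (M i k) : ℂ))
        = ∑ i : m, ∑ k : m, M i k * star (M i k) := by
          refine Finset.sum_congr rfl fun i _ => Finset.sum_congr rfl fun k _ => ?_
          rw [show star (M i k) = (starRingEnd ℂ) (M i k) from rfl, Complex.mul_conj]
      _ = ∑ i : m, ∑ k : m, M i k * M k i := by
          refine Finset.sum_congr rfl fun i _ => Finset.sum_congr rfl fun k _ => ?_
          rw [hsym i k]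
      _ = (M * M).trace := by
          simp only [Matrix.trace, Matrix.diag, Matrix.mul_apply]
      _ = 0 := by rw [hI, hT]
  rw [Complex.ofReal_eq_zero] at h0
  have hnn : ∀ i ∈ (Finset.univ : Finset m), 0 ≤ ∑ k : m, Complex.normSq (M i k) :=
    fun i _ => Finset.sum_nonneg fun k _ => Complex.normSq_nonneg _
  ext i k
  have hi0 := (Finset.sum_eq_zero_iff_of_nonneg hnn).1 h0 i (Finset.mem_univ i)
  have := (Finset.sum_eq_zero_iff_of_nonneg
    (fun k _ => Complex.normSq_nonneg (M i k))).1 hi0 k (Finset.mem_univ k)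
  simpa [Complex.normSq_eq_zero] using this

lemma proj_eq {ψ : (Fin n → Fin 2) → ℂ} (hψ1 : ∑ x, star (ψ x) * ψ x = 1)
    (hfin : (Stab ψ).Finite) (hcard : hfin.toFinset.card = 2 ^ n) :
    ((2 : ℂ) ^ n)⁻¹ • (∑ g ∈ hfin.toFinset, g) = Matrix.vecMulVec ψ (star ψ) := by
  have hψ0 : ψ ≠ 0 := by
    intro h; rw [h] at hψ1; simp at hψ1
  set F := hfin.toFinset with hF
  have hmemF : ∀ {g}, g ∈ F ↔ g ∈ Stab ψ := fun {g} => Set.Finite.mem_toFinset hfin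
  set c : ℂ := (2 : ℂ) ^ n with hc
  have hc0 : c ≠ 0 := pow_ne_zero n two_ne_zero
  set SA : Matrix (Fin n → Fin 2) (Fin n → Fin 2) ℂ := ∑ g ∈ F, g with hSA
  set Q : Matrix (Fin n → Fin 2) (Fin n → Fin 2) ℂ := c⁻¹ • SA with hQ
  set P : Matrix (Fin n → Fin 2) (Fin n → Fin 2) ℂ := Matrix.vecMulVec ψ (star ψ) with hP
  -- basic facts about SA
  have hSvec : SA.mulVec ψ = c • ψ := by
    rw [hSA, msum_mulVec]
    rw [Finset.sum_congr rfl fun g hg => (hmemF.1 hg).2]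
    rw [Finset.sum_const, hcard, ← Nat.cast_smul_eq_nsmul ℂ]
    congr 1
    rw [hc]; push_cast; ring
  have hSmul : SA * SA = c • SA := by
    rw [hSA, Finset.sum_mul_sum]
    have hrow : ∀ g ∈ F, ∑ h ∈ F, g * h = SA := by
      intro g hg
      refine Finset.sum_nbij' (fun h => g * h) (fun h => g * h) ?_ ?_ ?_ ?_ ?_
      · intro h hh; exact hmemF.2 (stab_mul (hmemF.1 hg) (hmemF.1 hh))
      · intro h hh; exact hmemF.2 (stab_mul (hmemF.1 hg) (hmemF.1 hh))
      · intro h hh; show g * (g * h) = h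
        rw [← mul_assoc, stab_sq hψ0 (hmemF.1 hg), one_mul]
      · intro h hh; show g * (g * h) = h
        rw [← mul_assoc, stab_sq hψ0 (hmemF.1 hg), one_mul]
      · intro h hh; rfl
    rw [Finset.sum_congr rfl hrow, Finset.sum_const, hcard, ← Nat.cast_smul_eq_nsmul ℂ]
    congr 1
    rw [hc]; push_cast; ring
  have hStr : SA.trace = c := by
    rw [hSA, Matrix.trace_sum]
    rw [Finset.sum_eq_single_of_mem 1 (hmemF.2 stab_one)
      (fun g hg hne => stab_trace hψ0 (hmemF.1 hg) hne)]
    exact trace_one_card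
  have hSH : SAᴴ = SA := by
    rw [hSA, Matrix.conjTranspose_sum]
    exact Finset.sum_congr rfl fun g hg => stab_herm hψ0 (hmemF.1 hg)
  -- facts about Q
  have hQvec : Q.mulVec ψ = ψ := by
    rw [hQ, Matrix.smul_mulVec, hSvec, smul_smul, inv_mul_cancel₀ hc0, one_smul]
  have hQQ : Q * Q = Q := by
    rw [hQ, smul_mul_smul_comm, hSmul, smul_smul]
    congr 1
    field_simp
  have hQH : Qᴴ = Q := by
    rw [hQ, Matrix.conjTranspose_smul, hSH]
    congr 1
    rw [hc]
    simp [star_pow]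
  have hQtr : Q.trace = 1 := by
    rw [hQ, Matrix.trace_smul, hStr, smul_eq_mul, inv_mul_cancel₀ hc0]
  -- facts about P
  have hPapp : ∀ i j, P i j = ψ i * star (ψ j) := fun i j => rfl
  have hPH : Pᴴ = P := by
    ext i j
    simp only [Matrix.conjTranspose_apply, hPapp, star_mul', star_star]
    ring
  have hPtr : P.trace = 1 := by
    simp only [Matrix.trace, Matrix.diag, hPapp]
    rw [← hψ1]
    exact Finset.sum_congr rfl fun x _ => mul_comm _ _
  have hPP : P * P = P := by
    ext i j
    simp only [Matrix.mul_apply, hPapp]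
    have hterm : ∀ k, (ψ i * star (ψ k)) * (ψ k * star (ψ j))
        = (ψ i * star (ψ j)) * (star (ψ k) * ψ k) := fun k => by ring
    rw [Finset.sum_congr rfl fun k _ => hterm k, ← Finset.mul_sum, hψ1, mul_one]
  have hQP : Q * P = P := by
    ext i j
    simp only [Matrix.mul_apply, hPapp]
    have hterm : ∀ k, Q i k * (ψ k * star (ψ j)) = (Q i k * ψ k) * star (ψ j) :=
      fun k => by ring
    rw [Finset.sum_congr rfl fun k _ => hterm k, ← Finset.sum_mul]
    have : ∑ k, Q i k * ψ k = ψ i := congrFun hQvec i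
    rw [this]
  have hPQ : P * Q = P := by
    ext i j
    simp only [Matrix.mul_apply, hPapp]
    have hterm : ∀ k, (ψ i * star (ψ k)) * Q k j = ψ i * (star (ψ k) * Q k j) :=
      fun k => by ring
    rw [Finset.sum_congr rfl fun k _ => hterm k, ← Finset.mul_sum]
    have hcol : ∑ k, star (ψ k) * Q k j = star (ψ j) := by
      have h1 : ∀ k, star (ψ k) * Q k j = star (ψ k * star (Q k j)) := by
        intro k; rw [star_mul', star_star]
      rw [Finset.sum_congr rfl fun k _ => h1 k, ← star_sum]
      congr 1
      have h2 : ∀ k, ψ k * star (Q k j) = Q j k * ψ k := by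
        intro k
        have h3 := congrFun (congrFun hQH j) k
        rw [Matrix.conjTranspose_apply] at h3
        rw [h3]; ring
      rw [Finset.sum_congr rfl fun k _ => h2 k]
      exact congrFun hQvec j
    rw [hcol]
  -- conclude
  have hM : Q - P = 0 := by
    apply herm_idem_trace_zero
    · rw [Matrix.conjTranspose_sub, hQH, hPH]
    · rw [Matrix.sub_mul, Matrix.mul_sub, Matrix.mul_sub, hQQ, hQP, hPQ, hPP]
      abel
    · rw [Matrix.trace_sub, hQtr, hPtr, sub_self]
  have := sub_eq_zero.1 hM
  rw [hQ, hP] at this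
  exact this
/-- If ψ, φ are n-qubit stabilizer states (stabilizer groups of order 2^n) such that
no σ ∈ S(ψ) has -σ ∈ S(φ), and |S(ψ) ∩ S(φ)| = 2^r, then |⟨φ|ψ⟩|² = 2^{r-n}. -/
theorem stmt2 {n r : ℕ} (ψ φ : (Fin n → Fin 2) → ℂ)
    (hψ : ∑ x, ‖ψ x‖ ^ 2 = 1) (hφ : ∑ x, ‖φ x‖ ^ 2 = 1)
    (hSψ : (Stab ψ).ncard = 2 ^ n) (hSφ : (Stab φ).ncard = 2 ^ n)
    (hno : ∀ σ ∈ Stab ψ, -σ ∉ Stab φ)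
    (hint : ((Stab ψ) ∩ (Stab φ)).ncard = 2 ^ r) :
    ‖∑ x, (starRingEnd ℂ) (φ x) * ψ x‖ ^ 2 = (2 : ℝ) ^ r / 2 ^ n := by
  have key : ∀ z : ℂ, star z * z = ((‖z‖ ^ 2 : ℝ) : ℂ) := fun z => by
    rw [show star z = (starRingEnd ℂ) z from rfl, mul_comm, Complex.mul_conj,
      Complex.normSq_eq_norm_sq]
  have hunit : ∀ (χ : (Fin n → Fin 2) → ℂ), (∑ x, ‖χ x‖ ^ 2 = 1) →
      ∑ x, star (χ x) * χ x = 1 := by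
    intro χ hχ
    rw [Finset.sum_congr rfl fun x _ => key (χ x), ← Complex.ofReal_sum, hχ]
    norm_num
  have hψ1 := hunit ψ hψ
  have hφ1 := hunit φ hφ
  have hψ0 : ψ ≠ 0 := by
    intro h; rw [h] at hψ1; simp at hψ1
  have hφ0 : φ ≠ 0 := by
    intro h; rw [h] at hφ1; simp at hφ1
  have hfψ : (Stab ψ).Finite :=
    Set.finite_of_ncard_ne_zero (by rw [hSψ]; exact pow_ne_zero n two_ne_zero)
  have hfφ : (Stab φ).Finite :=
    Set.finite_of_ncard_ne_zero (by rw [hSφ]; exact pow_ne_zero n two_ne_zero)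
  have hcψ : hfψ.toFinset.card = 2 ^ n := by
    rw [← Set.ncard_eq_toFinset_card _ hfψ, hSψ]
  have hcφ : hfφ.toFinset.card = 2 ^ n := by
    rw [← Set.ncard_eq_toFinset_card _ hfφ, hSφ]
  have hprψ := proj_eq hψ1 hfψ hcψ
  have hprφ := proj_eq hφ1 hfφ hcφ
  set c : ℂ := (2 : ℂ) ^ n with hc
  have hc0 : c ≠ 0 := pow_ne_zero n two_ne_zero
  set s : ℂ := ∑ x, (starRingEnd ℂ) (φ x) * ψ x with hs
  -- Step A : trace of product of projectors equals ‖s‖²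
  have stepA : (Matrix.vecMulVec ψ (star ψ) * Matrix.vecMulVec φ (star φ)).trace
      = ((‖s‖ ^ 2 : ℝ) : ℂ) := by
    have hterm : ∀ i k : Fin n → Fin 2,
        (ψ i * star (ψ k)) * (φ k * star (φ i))
          = (star (φ i) * ψ i) * (star (ψ k) * φ k) := fun i k => by ring
    calc (Matrix.vecMulVec ψ (star ψ) * Matrix.vecMulVec φ (star φ)).trace
        = ∑ i, ∑ k, (ψ i * star (ψ k)) * (φ k * star (φ i)) := by
          simp only [Matrix.trace, Matrix.diag, Matrix.mul_apply,
            Matrix.vecMulVec_apply, Pi.star_apply]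
      _ = ∑ i, ∑ k, (star (φ i) * ψ i) * (star (ψ k) * φ k) := by
          exact Finset.sum_congr rfl fun i _ => Finset.sum_congr rfl fun k _ => hterm i k
      _ = (∑ i, star (φ i) * ψ i) * (∑ k, star (ψ k) * φ k) := by
          rw [Finset.sum_mul_sum]
      _ = s * (starRingEnd ℂ) s := by
          congr 1
          rw [hs, map_sum]
          refine Finset.sum_congr rfl fun x _ => ?_
          rw [_root_.map_mul, Complex.conj_conj]
          exact (mul_comm _ _)
      _ = ((‖s‖ ^ 2 : ℝ) : ℂ) := by
          rw [Complex.mul_conj, Complex.normSq_eq_norm_sq]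
  -- Step B : the double sum over stabilizer elements
  have hint_fin : (Stab ψ ∩ Stab φ).Finite := hfψ.inter_of_left _
  have hintcard : (hfψ.toFinset ∩ hfφ.toFinset).card = 2 ^ r := by
    rw [← Set.Finite.toFinset_inter hfψ hfφ hint_fin,
      ← Set.ncard_eq_toFinset_card _ hint_fin, hint]
  have stepB : ((∑ g ∈ hfψ.toFinset, g) * (∑ h ∈ hfφ.toFinset, h)).trace
      = ((2 : ℂ) ^ r) * c := by
    rw [Finset.sum_mul_sum]
    rw [Matrix.trace_sum]
    have hrow : ∀ g ∈ hfψ.toFinset,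
        (∑ h ∈ hfφ.toFinset, g * h).trace = if g ∈ hfφ.toFinset then c else 0 := by
      intro g hg
      have hgS : g ∈ Stab ψ := (Set.Finite.mem_toFinset hfψ).1 hg
      rw [Matrix.trace_sum]
      have hcell : ∀ h ∈ hfφ.toFinset, (g * h).trace = if h = g then c else 0 := by
        intro h hh
        have hhS : h ∈ Stab φ := (Set.Finite.mem_toFinset hfφ).1 hh
        by_cases he : h = g
        · subst he
          rw [if_pos rfl, stab_sq hψ0 hgS]
          exact trace_one_card
        · rw [if_neg he]
          exact stab_trace_orth hψ0 hφ0 hgS hhS he (hno g hgS)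
      rw [Finset.sum_congr rfl hcell, Finset.sum_ite_eq' hfφ.toFinset g (fun _ => c)]
    rw [Finset.sum_congr rfl hrow]
    rw [Finset.sum_ite_mem, Finset.sum_const, hintcard, ← Nat.cast_smul_eq_nsmul ℂ,
      smul_eq_mul]
    push_cast
    ring
  -- combine
  have main : ((‖s‖ ^ 2 : ℝ) : ℂ) = (2 : ℂ) ^ r / c := by
    rw [← stepA, ← hprψ, ← hprφ, smul_mul_smul_comm, Matrix.trace_smul, stepB]
    field_simp
    simp only [smul_eq_mul, one_div, pow_two, mul_inv]
    rw [show c * (c⁻¹ * c⁻¹ * (c * 2 ^ r)) = (c * c⁻¹) * (c⁻¹ * c) * 2 ^ r by ring,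
      mul_inv_cancel₀ hc0, inv_mul_cancel₀ hc0, one_mul, one_mul]
  have : ((‖s‖ ^ 2 : ℝ) : ℂ) = (((2 : ℝ) ^ r / 2 ^ n : ℝ) : ℂ) := by
    rw [main, hc]
    push_cast
    ring
  exact_mod_cast this
end
end

section
/- For the 3-qubit GHZ state |GHZ⟩ = (|000⟩+|111⟩)/√2, any tripartite multi-invariant with replica number n (i.e. with N = 2n tensors, n copies of ψ and n of ψ̄) evaluates to Z_GHZ(σ₁,σ₂,σ₃) = 2^{1-n}, provided the associated contraction graph is connected. -/
open scoped Classical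

noncomputable section

def multiInv {q n : ℕ} (d : Fin q → Type*) [∀ a, Fintype (d a)]
    (ψ : (∀ a, d a) → ℂ) (σ : Fin q → Equiv.Perm (Fin n)) : ℂ :=
  ∑ α : Fin n → ∀ a, d a,
    (∏ j, ψ (α j)) * ∏ j, (starRingEnd ℂ) (ψ fun a => α (σ a j) a)

/-- Coefficient tensor of the 3-qubit GHZ state (|000⟩+|111⟩)/√2. -/
def ghz : (∀ _ : Fin 3, Fin 2) → ℂ :=
  fun α => if α 0 = α 1 ∧ α 1 = α 2 then ((Real.sqrt 2 : ℂ))⁻¹ else 0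

/-- The contraction graph of a tripartite multi-invariant: vertices are the n
ket tensors and n bra tensors; an edge joins ket copy j to bra copy (σ a) j for
each party a. -/
def contractionGraph {n : ℕ} (σ : Fin 3 → Equiv.Perm (Fin n)) :
    SimpleGraph (Fin n ⊕ Fin n) :=
  SimpleGraph.fromRel fun x y =>
    ∃ (a : Fin 3) (j : Fin n), x = Sum.inl j ∧ y = Sum.inr (σ a j)

/-- A function constant along edges of a preconnected graph is constant. -/
lemma walk_const {V : Type*} {G : SimpleGraph V} {f : V → Fin 2}
    (hf : ∀ x y, G.Adj x y → f x = f y) {x y : V} (w : G.Walk x y) :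
    f x = f y := by
  induction w with
  | nil => rfl
  | cons h _ ih => exact (hf _ _ h).trans ih

lemma ghz_const (v : Fin 2) : ghz (fun _ => v) = ((Real.sqrt 2 : ℂ))⁻¹ := by
  simp [ghz]

lemma sqrt2_sq : ((Real.sqrt 2 : ℂ))⁻¹ * ((Real.sqrt 2 : ℂ))⁻¹ = 2⁻¹ := by
  have h : ((Real.sqrt 2 : ℝ) : ℂ) * ((Real.sqrt 2 : ℝ) : ℂ) = 2 := by
    rw [← Complex.ofReal_mul, Real.mul_self_sqrt (by norm_num : (0:ℝ) ≤ 2)]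
    norm_num
  rw [← mul_inv, h]

lemma fin2_cases (v : Fin 2) : v = 0 ∨ v = 1 := by
  fin_cases v <;> simp

/-- Any tripartite multi-invariant of the GHZ state with replica number n whose
contraction graph is connected evaluates to 2^{1-n}. -/
theorem stmt14 {n : ℕ} (σ : Fin 3 → Equiv.Perm (Fin n))
    (hconn : (contractionGraph σ).Connected) :
    multiInv (fun _ : Fin 3 => Fin 2) ghz σ = (2 : ℂ) ^ (1 - (n : ℤ)) := by
  have hn : 0 < n := by
    rcases hconn.nonempty.some with j | j
    · exact j.pos
    · exact j.pos
  set c0 : Fin n → ∀ _ : Fin 3, Fin 2 := fun _ _ => 0 with hc0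
  set c1 : Fin n → ∀ _ : Fin 3, Fin 2 := fun _ _ => 1 with hc1
  have hne : c0 ≠ c1 := by
    intro h
    have := congrFun (congrFun h ⟨0, hn⟩) 0
    simp [hc0, hc1] at this
  set T : (Fin n → ∀ _ : Fin 3, Fin 2) → ℂ := fun α =>
    (∏ j, ghz (α j)) * ∏ j, (starRingEnd ℂ) (ghz fun a => α (σ a j) a) with hT
  have hval : ∀ β : ∀ _ : Fin 3, Fin 2, ghz β ≠ 0 → β 0 = β 1 ∧ β 1 = β 2 := by
    intro β h
    by_contra hc
    rw [ghz, if_neg hc] at h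
    exact h rfl
  -- key lemma: if T α ≠ 0 then α is one of the two constants
  have key : ∀ α, α ∉ ({c0, c1} : Finset (Fin n → ∀ _ : Fin 3, Fin 2)) → T α = 0 := by
    intro α hα
    by_contra hTα
    apply hα
    have hmul := mul_ne_zero_iff.mp hTα
    have hket : ∀ j, ghz (α j) ≠ 0 :=
      fun j => Finset.prod_ne_zero_iff.mp hmul.1 j (Finset.mem_univ j)
    have hbra : ∀ j, ghz (fun a => α (σ a j) a) ≠ 0 := by
      intro j
      have := Finset.prod_ne_zero_iff.mp hmul.2 j (Finset.mem_univ j)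
      exact fun h => this (by rw [h, map_zero])
    set c : Fin n → Fin 2 := fun j => α j 0 with hc
    have hcj : ∀ j a, α j a = c j := by
      intro j a
      obtain ⟨h1, h2⟩ := hval _ (hket j)
      fin_cases a
      · exact rfl
      · exact h1.symm
      · exact (h1.trans h2).symm
    have hbra' : ∀ j a, c (σ a j) = c (σ 0 j) := by
      intro j a
      obtain ⟨h1, h2⟩ := hval _ (hbra j)
      rw [hcj _ 0] at h1
      rw [hcj _ 1] at h1 h2
      rw [hcj _ 2] at h2
      fin_cases a
      · rfl
      · exact h1.symm
      · exact (h1.trans h2).symm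
    -- the edge-constant function on the contraction graph
    set f : Fin n ⊕ Fin n → Fin 2 := Sum.elim (fun j => c (σ 0 j)) c with hfdef
    have hadj : ∀ x y, (contractionGraph σ).Adj x y → f x = f y := by
      intro x y hxy
      rw [contractionGraph, SimpleGraph.fromRel_adj] at hxy
      rcases hxy.2 with ⟨a, j, rfl, rfl⟩ | ⟨a, j, rfl, rfl⟩
      · simpa [hfdef] using (hbra' j a).symm
      · simpa [hfdef] using hbra' j a
    have hconst : ∀ j, c j = c ⟨0, hn⟩ := by
      intro j
      exact walk_const hadj ((hconn.preconnected (Sum.inr j) (Sum.inr ⟨0, hn⟩)).some)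
    have hαeq : α = fun _ _ => c ⟨0, hn⟩ := by
      funext j a
      rw [hcj j a, hconst j]
    rcases fin2_cases (c ⟨0, hn⟩) with h | h
    · rw [hαeq]; simp only [h]
      exact Finset.mem_insert_self c0 {c1}
    · rw [hαeq]; simp only [h]
      exact Finset.mem_insert_of_mem (Finset.mem_singleton_self c1)
  have hTconst : ∀ v : Fin 2, T (fun _ _ => v) = (2 : ℂ)⁻¹ ^ n := by
    intro v
    have hstep : T (fun _ _ => v) = (∏ _j : Fin n, ((Real.sqrt 2 : ℂ))⁻¹) *
        ∏ _j : Fin n, (starRingEnd ℂ) ((Real.sqrt 2 : ℂ))⁻¹ := by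
      rw [hT]
      simp only [ghz_const]
    rw [hstep, Finset.prod_const, Finset.prod_const, Finset.card_univ, Fintype.card_fin,
      ← Complex.ofReal_inv, Complex.conj_ofReal, Complex.ofReal_inv, ← mul_pow, sqrt2_sq]
  have hsum : multiInv (fun _ : Fin 3 => Fin 2) ghz σ
      = ∑ α ∈ ({c0, c1} : Finset (Fin n → ∀ _ : Fin 3, Fin 2)), T α := by
    rw [multiInv]
    exact (Finset.sum_subset (Finset.subset_univ _) fun x _ hx => key x hx).symm
  rw [hsum, Finset.sum_pair hne, hc0, hc1, hTconst 0, hTconst 1]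
  rw [inv_pow]
  rw [zpow_sub₀ (by norm_num : (2:ℂ) ≠ 0), zpow_one, zpow_natCast]
  ring
end
end
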